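/- arXiv:1407.6494 — 3 statements merged into one kernel-verified Lean document; each statement's English description precedes it below -/
import Mathlib

section
/- Let n ≥ 1, let F be a finite subgroup of GL_n(ℂ), and let s ∈ GL_n(ℂ) be a semisimple element normalizing F (that is, s·F·s⁻¹ = F), with polar decomposition s = h·e (h hyperbolic semisimple, e elliptic semisimple, h·e = e·h = s). Then h commutes with every element of F. -/
noncomputable section

/-- A matrix in `GL (Fin n) ℂ` is *semisimple* if it is diagonalizable over `ℂ`. -/
def IsSemisimpleGL {n : ℕ} (s : GL (Fin n) ℂ) : Prop :=
  ∃ P : GL (Fin n) ℂ, ∃ d : Fin n → ℂ,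
    ((P * s * P⁻¹ : GL (Fin n) ℂ) : Matrix (Fin n) (Fin n) ℂ) = Matrix.diagonal d

/-- A matrix in `GL (Fin n) ℂ` is *hyperbolic semisimple* if it is diagonalizable over `ℂ`
with all eigenvalues real and positive. -/
def IsHyperbolicGL {n : ℕ} (s : GL (Fin n) ℂ) : Prop :=
  ∃ P : GL (Fin n) ℂ, ∃ d : Fin n → ℂ,
    ((P * s * P⁻¹ : GL (Fin n) ℂ) : Matrix (Fin n) (Fin n) ℂ) = Matrix.diagonal d ∧
    ∀ i, ∃ r : ℝ, 0 < r ∧ d i = (r : ℂ)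

/-- A matrix in `GL (Fin n) ℂ` is *elliptic semisimple* if it is diagonalizable over `ℂ`
with all eigenvalues of absolute value `1`. -/
def IsEllipticGL {n : ℕ} (s : GL (Fin n) ℂ) : Prop :=
  ∃ P : GL (Fin n) ℂ, ∃ d : Fin n → ℂ,
    ((P * s * P⁻¹ : GL (Fin n) ℂ) : Matrix (Fin n) (Fin n) ℂ) = Matrix.diagonal d ∧
    ∀ i, ‖d i‖ = 1



attribute [local instance] Matrix.linftyOpNormedRing

-- entry ≤ linfty op norm
lemma entry_norm_le {n : ℕ} (A : Matrix (Fin n) (Fin n) ℂ) (i j : Fin n) :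
    ‖A i j‖ ≤ ‖A‖ := by
  rw [Matrix.linfty_opNorm_def]
  have h1 : ‖A i j‖₊ ≤ ∑ j' : Fin n, ‖A i j'‖₊ :=
    Finset.single_le_sum (f := fun j' => ‖A i j'‖₊) (fun _ _ => zero_le) (Finset.mem_univ j)
  have h2 : (∑ j' : Fin n, ‖A i j'‖₊) ≤ (Finset.univ.sup fun i : Fin n => ∑ j' : Fin n, ‖A i j'‖₊) :=
    Finset.le_sup (f := fun i => ∑ j' : Fin n, ‖A i j'‖₊) (Finset.mem_univ i)
  exact_mod_cast h1.trans h2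

-- conjugated powers are diagonal
lemma conj_pow_diag {n : ℕ} (P h : GL (Fin n) ℂ) (d : Fin n → ℂ)
    (hPd : ((P * h * P⁻¹ : GL (Fin n) ℂ) : Matrix (Fin n) (Fin n) ℂ) = Matrix.diagonal d)
    (k : ℕ) :
    ((P * h ^ k * P⁻¹ : GL (Fin n) ℂ) : Matrix (Fin n) (Fin n) ℂ)
      = Matrix.diagonal (fun i => d i ^ k) := by
  have : (P * h * P⁻¹ : GL (Fin n) ℂ) ^ k = P * h ^ k * P⁻¹ := conj_pow
  rw [← this, Units.val_pow_eq_pow_val, hPd, Matrix.diagonal_pow]; rfl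

-- conjugated inverse is diagonal
lemma conj_inv_diag {n : ℕ} (P h : GL (Fin n) ℂ) (d : Fin n → ℂ)
    (hPd : ((P * h * P⁻¹ : GL (Fin n) ℂ) : Matrix (Fin n) (Fin n) ℂ) = Matrix.diagonal d)
    (hd : ∀ i, d i ≠ 0) :
    ((P * h⁻¹ * P⁻¹ : GL (Fin n) ℂ) : Matrix (Fin n) (Fin n) ℂ)
      = Matrix.diagonal (fun i => (d i)⁻¹) := by
  have h1 : P * h⁻¹ * P⁻¹ = (P * h * P⁻¹ : GL (Fin n) ℂ)⁻¹ := by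
    rw [mul_inv_rev, mul_inv_rev, inv_inv, mul_assoc]
  have h2 : Matrix.diagonal d * Matrix.diagonal (fun i => (d i)⁻¹) = 1 := by
    rw [Matrix.diagonal_mul_diagonal]
    convert Matrix.diagonal_one
    exact mul_inv_cancel₀ (hd _)
  have h4 : (P * h⁻¹ * P⁻¹ : GL (Fin n) ℂ) * (P * h * P⁻¹) = 1 := by group
  have h3 : ((P * h⁻¹ * P⁻¹ : GL (Fin n) ℂ) : Matrix (Fin n) (Fin n) ℂ) * Matrix.diagonal d = 1 := by
    calc ((P * h⁻¹ * P⁻¹ : GL (Fin n) ℂ) : Matrix (Fin n) (Fin n) ℂ) * Matrix.diagonal d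
        = ↑(P * h⁻¹ * P⁻¹ : GL (Fin n) ℂ) * ↑(P * h * P⁻¹ : GL (Fin n) ℂ) := by rw [hPd]
      _ = ↑((P * h⁻¹ * P⁻¹ : GL (Fin n) ℂ) * (P * h * P⁻¹)) := (Units.val_mul _ _).symm
      _ = 1 := by rw [h4]; rfl
  calc ((P * h⁻¹ * P⁻¹ : GL (Fin n) ℂ) : Matrix (Fin n) (Fin n) ℂ)
      = ↑(P * h⁻¹ * P⁻¹ : GL (Fin n) ℂ) * (Matrix.diagonal d * Matrix.diagonal (fun i => (d i)⁻¹)) := by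
        rw [h2, mul_one]
    _ = (↑(P * h⁻¹ * P⁻¹ : GL (Fin n) ℂ) * Matrix.diagonal d) * Matrix.diagonal (fun i => (d i)⁻¹) := (mul_assoc _ _ _).symm
    _ = Matrix.diagonal (fun i => (d i)⁻¹) := by rw [h3, one_mul]

-- elliptic power bound
lemma elliptic_pow_bound {n : ℕ} (Q e : GL (Fin n) ℂ) (u : Fin n → ℂ)
    (hQu : ((Q * e * Q⁻¹ : GL (Fin n) ℂ) : Matrix (Fin n) (Fin n) ℂ) = Matrix.diagonal u)
    (hu : ∀ i, ‖u i‖ = 1) (k : ℕ) :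
    ‖((e ^ k : GL (Fin n) ℂ) : Matrix (Fin n) (Fin n) ℂ)‖
      ≤ ‖((Q⁻¹ : GL (Fin n) ℂ) : Matrix (Fin n) (Fin n) ℂ)‖ * ‖((Q : GL (Fin n) ℂ) : Matrix (Fin n) (Fin n) ℂ)‖ := by
  have h1 : (e ^ k : GL (Fin n) ℂ) = Q⁻¹ * (Q * e ^ k * Q⁻¹) * Q := by group
  have h2 : ((Q * e ^ k * Q⁻¹ : GL (Fin n) ℂ) : Matrix (Fin n) (Fin n) ℂ)
      = Matrix.diagonal (fun i => u i ^ k) := conj_pow_diag Q e u hQu k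
  have h3 : ‖Matrix.diagonal (fun i => u i ^ k)‖ ≤ 1 := by
    rw [Matrix.linfty_opNorm_diagonal]
    refine pi_norm_le_iff_of_nonneg zero_le_one |>.2 fun i => ?_
    simp [norm_pow, hu]
  calc ‖((e ^ k : GL (Fin n) ℂ) : Matrix (Fin n) (Fin n) ℂ)‖
      = ‖((Q⁻¹ : GL (Fin n) ℂ) : Matrix (Fin n) (Fin n) ℂ) * Matrix.diagonal (fun i => u i ^ k) * ((Q : GL (Fin n) ℂ) : Matrix (Fin n) (Fin n) ℂ)‖ := by
        rw [h1, Units.val_mul, Units.val_mul, h2]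
    _ ≤ ‖((Q⁻¹ : GL (Fin n) ℂ) : Matrix (Fin n) (Fin n) ℂ) * Matrix.diagonal (fun i => u i ^ k)‖ * ‖((Q : GL (Fin n) ℂ) : Matrix (Fin n) (Fin n) ℂ)‖ := norm_mul_le _ _
    _ ≤ (‖((Q⁻¹ : GL (Fin n) ℂ) : Matrix (Fin n) (Fin n) ℂ)‖ * ‖Matrix.diagonal (fun i => u i ^ k)‖) * ‖((Q : GL (Fin n) ℂ) : Matrix (Fin n) (Fin n) ℂ)‖ := by
        gcongr; exact norm_mul_le _ _
    _ ≤ (‖((Q⁻¹ : GL (Fin n) ℂ) : Matrix (Fin n) (Fin n) ℂ)‖ * 1) * ‖((Q : GL (Fin n) ℂ) : Matrix (Fin n) (Fin n) ℂ)‖ := by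
        gcongr
    _ = _ := by ring

-- archimedean lemma
lemma le_of_pow_bounded {a b c B : ℝ} (ha : 0 < a) (hb : 0 < b) (hc : 0 < c)
    (H : ∀ k : ℕ, a ^ k * c * ((b ^ k)⁻¹) ≤ B) : a ≤ b := by
  by_contra hab
  push_neg at hab
  have ht : 1 < a / b := (one_lt_div hb).2 hab
  obtain ⟨k, hk⟩ := pow_unbounded_of_one_lt (B / c) ht
  have h1 : B / c < a ^ k * (b ^ k)⁻¹ := by rw [div_pow] at hk; rw [div_eq_mul_inv] at hk; exact hk
  have h2 : B < a ^ k * c * (b ^ k)⁻¹ := by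
    have : B < (a / b) ^ k * c := (div_lt_iff₀ hc).1 hk
    calc B < (a / b) ^ k * c := this
      _ = a ^ k * c * (b ^ k)⁻¹ := by rw [div_pow, div_eq_mul_inv]; ring
  linarith [H k]

/-- If a semisimple element `s` of `GL_n(ℂ)` normalizes a finite subgroup `F`,
then the hyperbolic part of the polar decomposition of `s` commutes with every
element of `F`. -/
theorem hyperbolic_part_centralizes_finite (n : ℕ) (hn : 1 ≤ n)
    (F : Subgroup (GL (Fin n) ℂ)) (hF : (F : Set (GL (Fin n) ℂ)).Finite)
    (s : GL (Fin n) ℂ) (hs : IsSemisimpleGL s) (hnorm : s ∈ Subgroup.normalizer (F : Set (GL (Fin n) ℂ)))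
    (h e : GL (Fin n) ℂ) (hdec : s = h * e) (hcomm : h * e = e * h)
    (hh : IsHyperbolicGL h) (he : IsEllipticGL e) :
    ∀ g ∈ F, h * g = g * h := by
  intro g hg
  obtain ⟨P, d, hPd, hd⟩ := hh
  obtain ⟨Q, u, hQu, hu⟩ := he
  choose r hrpos hdr using hd
  have hdne : ∀ i, d i ≠ 0 := fun i => by
    rw [hdr i]; exact_mod_cast (hrpos i).ne'
  set g' : Matrix (Fin n) (Fin n) ℂ := ((P * g * P⁻¹ : GL (Fin n) ℂ) : Matrix (Fin n) (Fin n) ℂ)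
    with hg'
  -- bound on the (finite) subgroup F
  obtain ⟨M, hM⟩ :=
    (hF.image (fun x : GL (Fin n) ℂ => ‖(x : Matrix (Fin n) (Fin n) ℂ)‖)).bddAbove
  have hMf : ∀ f : GL (Fin n) ℂ, f ∈ F → ‖(f : Matrix (Fin n) (Fin n) ℂ)‖ ≤ M := by
    intro f hf; exact hM (Set.mem_image_of_mem _ hf)
  have hM0 : (0:ℝ) ≤ M := (norm_nonneg _).trans (hMf 1 F.one_mem)
  -- bounds on powers of e and e⁻¹
  set Ce : ℝ := ‖((Q⁻¹ : GL (Fin n) ℂ) : Matrix (Fin n) (Fin n) ℂ)‖ *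
      ‖((Q : GL (Fin n) ℂ) : Matrix (Fin n) (Fin n) ℂ)‖ with hCe
  have hCe0 : (0:ℝ) ≤ Ce := mul_nonneg (norm_nonneg _) (norm_nonneg _)
  have heb : ∀ k : ℕ, ‖((e ^ k : GL (Fin n) ℂ) : Matrix (Fin n) (Fin n) ℂ)‖ ≤ Ce :=
    fun k => elliptic_pow_bound Q e u hQu hu k
  have hune : ∀ i, u i ≠ 0 := fun i => by
    intro h0; have := hu i; rw [h0] at this; simp at this
  have hQu' : ((Q * e⁻¹ * Q⁻¹ : GL (Fin n) ℂ) : Matrix (Fin n) (Fin n) ℂ)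
      = Matrix.diagonal (fun i => (u i)⁻¹) := conj_inv_diag Q e u hQu hune
  have heb' : ∀ k : ℕ, ‖((e⁻¹ ^ k : GL (Fin n) ℂ) : Matrix (Fin n) (Fin n) ℂ)‖ ≤ Ce := by
    intro k
    exact elliptic_pow_bound Q e⁻¹ _ hQu' (fun i => by rw [norm_inv, hu, inv_one]) k
  -- the global bound
  set B : ℝ := ‖((P : GL (Fin n) ℂ) : Matrix (Fin n) (Fin n) ℂ)‖ * (Ce * M * Ce) *
      ‖((P⁻¹ : GL (Fin n) ℂ) : Matrix (Fin n) (Fin n) ℂ)‖ with hB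
  have keybound : ∀ a f b : GL (Fin n) ℂ, f ∈ F →
      ‖(a : Matrix (Fin n) (Fin n) ℂ)‖ ≤ Ce → ‖(b : Matrix (Fin n) (Fin n) ℂ)‖ ≤ Ce →
      ‖((P * (a * f * b) * P⁻¹ : GL (Fin n) ℂ) : Matrix (Fin n) (Fin n) ℂ)‖ ≤ B := by
    intro a f b hf hA hBb
    have n1 : ‖((a * f * b : GL (Fin n) ℂ) : Matrix (Fin n) (Fin n) ℂ)‖ ≤ Ce * M * Ce := by
      rw [Units.val_mul, Units.val_mul]
      calc ‖(a : Matrix (Fin n) (Fin n) ℂ) * f * b‖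
          ≤ ‖(a : Matrix (Fin n) (Fin n) ℂ) * f‖ * ‖(b : Matrix (Fin n) (Fin n) ℂ)‖ :=
            norm_mul_le _ _
        _ ≤ (‖(a : Matrix (Fin n) (Fin n) ℂ)‖ * ‖(f : Matrix (Fin n) (Fin n) ℂ)‖) *
              ‖(b : Matrix (Fin n) (Fin n) ℂ)‖ :=
            mul_le_mul_of_nonneg_right (norm_mul_le _ _) (norm_nonneg _)
        _ ≤ (Ce * M) * Ce :=
            mul_le_mul (mul_le_mul hA (hMf f hf) (norm_nonneg _) hCe0)
              hBb (norm_nonneg _) (mul_nonneg hCe0 hM0)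
    rw [Units.val_mul, Units.val_mul]
    calc ‖(P : Matrix (Fin n) (Fin n) ℂ) * ((a * f * b : GL (Fin n) ℂ) : Matrix (Fin n) (Fin n) ℂ)
            * ((P⁻¹ : GL (Fin n) ℂ) : Matrix (Fin n) (Fin n) ℂ)‖
        ≤ ‖(P : Matrix (Fin n) (Fin n) ℂ) * ((a * f * b : GL (Fin n) ℂ) : Matrix (Fin n) (Fin n) ℂ)‖
            * ‖((P⁻¹ : GL (Fin n) ℂ) : Matrix (Fin n) (Fin n) ℂ)‖ := norm_mul_le _ _
      _ ≤ (‖(P : Matrix (Fin n) (Fin n) ℂ)‖ *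
            ‖((a * f * b : GL (Fin n) ℂ) : Matrix (Fin n) (Fin n) ℂ)‖) *
            ‖((P⁻¹ : GL (Fin n) ℂ) : Matrix (Fin n) (Fin n) ℂ)‖ :=
          mul_le_mul_of_nonneg_right (norm_mul_le _ _) (norm_nonneg _)
      _ ≤ B := by
          rw [hB]
          exact mul_le_mul_of_nonneg_right
            (mul_le_mul_of_nonneg_left n1 (norm_nonneg _)) (norm_nonneg _)
  -- group identities
  have c : Commute h e := hcomm
  have hdec' : s = e * h := hdec.trans hcomm
  have hsk1 : ∀ k : ℕ, h ^ k = (e⁻¹) ^ k * s ^ k := by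
    intro k
    rw [inv_pow, hdec', c.symm.mul_pow, inv_mul_cancel_left]
  have hsk2 : ∀ k : ℕ, h ^ k = s ^ k * (e⁻¹) ^ k := by
    intro k
    rw [inv_pow, hdec, c.mul_pow, mul_inv_cancel_right]
  have idA : ∀ k : ℕ, h ^ k * g * (h ^ k)⁻¹
      = (e⁻¹) ^ k * (s ^ k * g * (s ^ k)⁻¹) * e ^ k := by
    intro k; rw [hsk1 k]; group
  have idB : ∀ k : ℕ, (h ^ k)⁻¹ * g * h ^ k
      = e ^ k * ((s ^ k)⁻¹ * g * s ^ k) * (e⁻¹) ^ k := by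
    intro k; rw [hsk2 k]; group
  -- membership of conjugates in F
  have hfk : ∀ k : ℕ, s ^ k * g * (s ^ k)⁻¹ ∈ F := fun k =>
    (Subgroup.mem_normalizer_iff.1 (pow_mem hnorm k) g).1 hg
  have hfk' : ∀ k : ℕ, (s ^ k)⁻¹ * g * s ^ k ∈ F := by
    intro k
    have := (Subgroup.mem_normalizer_iff.1 (inv_mem (pow_mem hnorm k)) g).1 hg
    rwa [inv_inv] at this
  -- diagonal conjugates of powers of h
  have hinv : ((P * h⁻¹ * P⁻¹ : GL (Fin n) ℂ) : Matrix (Fin n) (Fin n) ℂ)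
      = Matrix.diagonal (fun i => (d i)⁻¹) := conj_inv_diag P h d hPd hdne
  have hpow : ∀ k : ℕ, ((P * h ^ k * P⁻¹ : GL (Fin n) ℂ) : Matrix (Fin n) (Fin n) ℂ)
      = Matrix.diagonal (fun i => d i ^ k) := conj_pow_diag P h d hPd
  have hpow' : ∀ k : ℕ, ((P * (h ^ k)⁻¹ * P⁻¹ : GL (Fin n) ℂ) : Matrix (Fin n) (Fin n) ℂ)
      = Matrix.diagonal (fun i => ((d i)⁻¹) ^ k) := by
    intro k
    rw [← inv_pow]
    exact conj_pow_diag P h⁻¹ _ hinv k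
  -- entry computations
  have entryA : ∀ (k : ℕ) (i j : Fin n),
      ((P * (h ^ k * g * (h ^ k)⁻¹) * P⁻¹ : GL (Fin n) ℂ) : Matrix (Fin n) (Fin n) ℂ) i j
        = d i ^ k * g' i j * ((d j)⁻¹) ^ k := by
    intro k i j
    have e1 : (P * (h ^ k * g * (h ^ k)⁻¹) * P⁻¹ : GL (Fin n) ℂ)
        = (P * h ^ k * P⁻¹) * (P * g * P⁻¹) * (P * (h ^ k)⁻¹ * P⁻¹) := by group
    rw [e1, Units.val_mul, Units.val_mul, hpow k, hpow' k, ← hg']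
    simp [Matrix.diagonal_mul, Matrix.mul_diagonal]
  have entryB : ∀ (k : ℕ) (i j : Fin n),
      ((P * ((h ^ k)⁻¹ * g * h ^ k) * P⁻¹ : GL (Fin n) ℂ) : Matrix (Fin n) (Fin n) ℂ) i j
        = ((d i)⁻¹) ^ k * g' i j * d j ^ k := by
    intro k i j
    have e1 : (P * ((h ^ k)⁻¹ * g * h ^ k) * P⁻¹ : GL (Fin n) ℂ)
        = (P * (h ^ k)⁻¹ * P⁻¹) * (P * g * P⁻¹) * (P * h ^ k * P⁻¹) := by group
    rw [e1, Units.val_mul, Units.val_mul, hpow k, hpow' k, ← hg']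
    simp [Matrix.diagonal_mul, Matrix.mul_diagonal]
  -- the key claim
  have claim : ∀ i j : Fin n, g' i j ≠ 0 → d i = d j := by
    intro i j hne
    have hc0 : 0 < ‖g' i j‖ := norm_pos_iff.2 hne
    have absA : ∀ k : ℕ, (r i) ^ k * ‖g' i j‖ * ((r j) ^ k)⁻¹ ≤ B := by
      intro k
      have hb1 : ‖((P * (h ^ k * g * (h ^ k)⁻¹) * P⁻¹ : GL (Fin n) ℂ) :
          Matrix (Fin n) (Fin n) ℂ)‖ ≤ B := by
        rw [idA k]
        exact keybound _ _ _ (hfk k) (heb' k) (heb k)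
      have hb2 := (entry_norm_le _ i j).trans hb1
      rw [entryA k i j] at hb2
      rw [norm_mul, norm_mul, norm_pow, norm_pow, norm_inv,
        hdr i, hdr j, Complex.norm_real, Complex.norm_real,
        Real.norm_of_nonneg (hrpos i).le, Real.norm_of_nonneg (hrpos j).le] at hb2
      calc (r i) ^ k * ‖g' i j‖ * ((r j) ^ k)⁻¹
          = (r i) ^ k * ‖g' i j‖ * ((r j)⁻¹) ^ k := by rw [inv_pow]
        _ ≤ B := hb2
    have absB : ∀ k : ℕ, (r j) ^ k * ‖g' i j‖ * ((r i) ^ k)⁻¹ ≤ B := by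
      intro k
      have hb1 : ‖((P * ((h ^ k)⁻¹ * g * h ^ k) * P⁻¹ : GL (Fin n) ℂ) :
          Matrix (Fin n) (Fin n) ℂ)‖ ≤ B := by
        rw [idB k]
        exact keybound _ _ _ (hfk' k) (heb k) (heb' k)
      have hb2 := (entry_norm_le _ i j).trans hb1
      rw [entryB k i j] at hb2
      rw [norm_mul, norm_mul, norm_pow, norm_pow, norm_inv,
        hdr i, hdr j, Complex.norm_real, Complex.norm_real,
        Real.norm_of_nonneg (hrpos i).le, Real.norm_of_nonneg (hrpos j).le] at hb2
      calc (r j) ^ k * ‖g' i j‖ * ((r i) ^ k)⁻¹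
          = ((r i)⁻¹) ^ k * ‖g' i j‖ * (r j) ^ k := by rw [inv_pow]; ring
        _ ≤ B := hb2
    have le1 : r i ≤ r j := le_of_pow_bounded (hrpos i) (hrpos j) hc0 absA
    have le2 : r j ≤ r i := le_of_pow_bounded (hrpos j) (hrpos i) hc0 absB
    rw [hdr i, hdr j]
    exact_mod_cast le_antisymm le1 le2
  -- conclude
  have comm' : Matrix.diagonal d * g' = g' * Matrix.diagonal d := by
    ext i j
    rw [Matrix.diagonal_mul, Matrix.mul_diagonal]
    by_cases h0 : g' i j = 0
    · simp [h0]
    · rw [claim i j h0]; ring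
  have commGL : (P * h * P⁻¹) * (P * g * P⁻¹) = (P * g * P⁻¹) * (P * h * P⁻¹ : GL (Fin n) ℂ) :=
    Units.ext (by
      show (P * h * P⁻¹ : GL (Fin n) ℂ).val * (P * g * P⁻¹ : GL (Fin n) ℂ).val
        = (P * g * P⁻¹ : GL (Fin n) ℂ).val * (P * h * P⁻¹ : GL (Fin n) ℂ).val
      rw [hPd, ← hg']; exact comm')
  have e2 : (P * (h * g) * P⁻¹ : GL (Fin n) ℂ) = P * (g * h) * P⁻¹ := by
    calc (P * (h * g) * P⁻¹ : GL (Fin n) ℂ)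
        = (P * h * P⁻¹) * (P * g * P⁻¹) := by group
      _ = (P * g * P⁻¹) * (P * h * P⁻¹) := commGL
      _ = P * (g * h) * P⁻¹ := by group
  have e3 : (P * (h * g) : GL (Fin n) ℂ) = P * (g * h) := mul_right_cancel e2
  exact mul_left_cancel e3
end
end

section
/- Let n ≥ 1, let F be a finite subgroup of GL_n(ℂ), and let s ∈ GL_n(ℂ) be a semisimple element normalizing F (that is, s·F·s⁻¹ = F). Let ι ∈ F be such that ι·s is again semisimple. Then the hyperbolic part of ι·s equals the hyperbolic part of s, i.e. if s = h·e and ι·s = h'·e' are the polar decompositions then h' = h. -/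
noncomputable section


namespace PolarAux

open Matrix

variable {n : ℕ}

abbrev Mat (n : ℕ) := Matrix (Fin n) (Fin n) ℂ

/-- entry-sum "norm" -/
def Nm (A : Mat n) : ℝ := ∑ i, ∑ j, ‖A i j‖

lemma Nm_nonneg (A : Mat n) : 0 ≤ Nm A :=
  Finset.sum_nonneg fun _ _ => Finset.sum_nonneg fun _ _ => norm_nonneg _

lemma row_le_Nm (A : Mat n) (i : Fin n) : ∑ j, ‖A i j‖ ≤ Nm A :=
  Finset.single_le_sum (f := fun i => ∑ j, ‖A i j‖)
    (fun _ _ => Finset.sum_nonneg fun _ _ => norm_nonneg _) (Finset.mem_univ i)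

lemma entry_le_Nm (A : Mat n) (i j : Fin n) : ‖A i j‖ ≤ Nm A :=
  le_trans (Finset.single_le_sum (f := fun j => ‖A i j‖)
    (fun _ _ => norm_nonneg _) (Finset.mem_univ j)) (row_le_Nm A i)

lemma Nm_mul_le (A B : Mat n) : Nm (A * B) ≤ Nm A * Nm B := by
  have h1 : Nm (A * B) ≤ ∑ i, ∑ j, ∑ c, ‖A i c‖ * ‖B c j‖ := by
    apply Finset.sum_le_sum; intro i _
    apply Finset.sum_le_sum; intro j _
    rw [Matrix.mul_apply]
    exact (norm_sum_le _ _).trans (le_of_eq (by simp [norm_mul]))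
  refine h1.trans ?_
  have h2 : ∀ i j c : Fin n, True := fun _ _ _ => trivial
  calc ∑ i, ∑ j, ∑ c, ‖A i c‖ * ‖B c j‖
      = ∑ i, ∑ c, ‖A i c‖ * ∑ j, ‖B c j‖ := by
        congr 1; funext; rw [Finset.sum_comm]; simp [Finset.mul_sum]
    _ ≤ ∑ i, ∑ c, ‖A i c‖ * Nm B := by
        apply Finset.sum_le_sum; intro i _; apply Finset.sum_le_sum; intro c _
        exact mul_le_mul_of_nonneg_left (row_le_Nm B c) (norm_nonneg _)
    _ = Nm A * Nm B := by
        unfold Nm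
        rw [Finset.sum_mul]
        exact Finset.sum_congr rfl fun i _ => by rw [Finset.sum_mul]

lemma Nm_diagonal (v : Fin n → ℂ) : Nm (diagonal v) = ∑ i, ‖v i‖ := by
  unfold Nm
  congr 1; funext i
  rw [Finset.sum_eq_single i (fun j _ hj => by rw [diagonal_apply_ne _ hj.symm]; simp) (by simp)]
  simp


lemma eq_of_zpow_bounded {a b c C : ℝ} (ha : 0 < a) (hb : 0 < b) (hc : 0 < c)
    (H : ∀ k : ℤ, c * (b / a) ^ k ≤ C) : b = a := by
  set t := b / a with htdef
  have ht : 0 < t := div_pos hb ha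
  have key : ∀ u : ℝ, 1 < u → (∀ k : ℤ, c * u ^ k ≤ C) → False := by
    intro u hu H'
    obtain ⟨m, hm⟩ := pow_unbounded_of_one_lt (C / c) hu
    have := H' (m : ℤ)
    rw [zpow_natCast] at this
    have : u ^ m ≤ C / c := (le_div_iff₀ hc).2 (by linarith [this])
    linarith
  have : t = 1 := by
    rcases lt_trichotomy t 1 with hlt | heq | hgt
    · exfalso
      apply key t⁻¹ ((one_lt_inv₀ ht).2 hlt)
      intro k
      have := H (-k)
      rwa [_root_.zpow_neg, ← _root_.inv_zpow] at this
    · exact heq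
    · exact absurd (key t hgt H) (by simp)
  rw [htdef, div_eq_one_iff_eq ha.ne'] at this
  linarith [this]

lemma conj_zpow {G : Type*} [Group G] (a b : G) (k : ℤ) :
    (a⁻¹ * b * a) ^ k = a⁻¹ * b ^ k * a := by
  have := map_zpow (MulAut.conj a⁻¹) b k
  simpa [MulAut.conj_apply, mul_assoc] using this.symm

lemma val_zpow_diagonal {n : ℕ} (w : GL (Fin n) ℂ) (v : Fin n → ℂ) (hv : ∀ i, v i ≠ 0)
    (hw : (w : Mat n) = diagonal v) (k : ℤ) :
    ((w ^ k : GL (Fin n) ℂ) : Mat n) = diagonal (fun i => v i ^ k) := by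
  have hinv : ((w⁻¹ : GL (Fin n) ℂ) : Mat n) = diagonal (fun i => (v i)⁻¹) := by
    have h1 : (w : Mat n) * diagonal (fun i => (v i)⁻¹) = 1 := by
      rw [hw, diagonal_mul_diagonal]
      convert Matrix.diagonal_one using 2
      funext i
      exact mul_inv_cancel₀ (hv i)
    exact Units.inv_eq_of_mul_eq_one_right h1
  have hpow : ∀ m : ℕ, ((w ^ m : GL (Fin n) ℂ) : Mat n) = diagonal (fun i => v i ^ m) := by
    intro m
    induction m with
    | zero => simp
    | succ m ih =>
      rw [pow_succ, Units.val_mul, ih, hw, diagonal_mul_diagonal]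
      rfl
  have hpowinv : ∀ m : ℕ, (((w⁻¹) ^ m : GL (Fin n) ℂ) : Mat n)
      = diagonal (fun i => ((v i)⁻¹) ^ m) := by
    intro m
    induction m with
    | zero => simp
    | succ m ih =>
      rw [pow_succ, Units.val_mul, ih, hinv, diagonal_mul_diagonal]
      rfl
  cases k with
  | ofNat m =>
    rw [Int.ofNat_eq_coe, zpow_natCast, hpow m]
    have hfun : (fun i => v i ^ m) = fun i => v i ^ (m : ℤ) := by
      funext i
      rw [zpow_natCast]
    rw [hfun]
  | negSucc m =>
    rw [zpow_negSucc, ← inv_pow, hpowinv (m+1)]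
    have hfun : (fun i => (v i)⁻¹ ^ (m+1)) = fun i => v i ^ Int.negSucc m := by
      funext i
      rw [zpow_negSucc, ← _root_.inv_pow]
    rw [hfun]


lemma g_mem {G : Type*} [Group G] (F : Subgroup G) (s ι : G) (hι : ι ∈ F)
    (hnorm : s ∈ Subgroup.normalizer (F : Set G)) (k : ℤ) : s ^ (-k) * (ι * s) ^ k ∈ F := by
  have conjmem : ∀ t : G, t ∈ Subgroup.normalizer (F : Set G) → ∀ x ∈ F, t * x * t⁻¹ ∈ F :=
    fun t ht x hx => (Subgroup.mem_normalizer_iff.1 ht x).1 hx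
  induction k using Int.induction_on with
  | zero => simpa using F.one_mem
  | succ i ih =>
    have heq : s ^ (-((i : ℤ) + 1)) * (ι * s) ^ ((i : ℤ) + 1)
        = s⁻¹ * (s ^ (-(i : ℤ)) * (ι * s) ^ (i : ℤ) * ι) * (s⁻¹)⁻¹ := by
      group
      rw [show (1 : ℤ) + (i : ℤ) = (i : ℤ) + 1 by ring, _root_.zpow_add, zpow_one]
      simp only [mul_assoc]
    rw [heq]
    exact conjmem s⁻¹ (inv_mem hnorm) _ (F.mul_mem ih hι)
  | pred i ih =>
    have heq : s ^ (-(-(i : ℤ) - 1)) * (ι * s) ^ (-(i : ℤ) - 1)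
        = (s * (s ^ (-(-(i : ℤ))) * (ι * s) ^ (-(i : ℤ))) * s⁻¹) * ι⁻¹ := by
      group
      rw [show (-1 : ℤ) - (i : ℤ) = -(i : ℤ) + (-1) by ring]
      simp only [_root_.zpow_add, _root_.zpow_neg_one, _root_.mul_inv_rev, mul_assoc]
    rw [heq]
    exact F.mul_mem (conjmem s hnorm _ ih) (F.inv_mem hι)

end PolarAux



/-- If a semisimple `s ∈ GL_n(ℂ)` normalizes a finite subgroup `F` and `ι ∈ F` is such
that `ι·s` is again semisimple, then the hyperbolic parts of the polar decompositions of
`s` and of `ι·s` coincide. -/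
theorem hyperbolic_part_independent_of_inertia (n : ℕ) (hn : 1 ≤ n)
    (F : Subgroup (GL (Fin n) ℂ)) (hF : (F : Set (GL (Fin n) ℂ)).Finite)
    (s : GL (Fin n) ℂ) (hs : IsSemisimpleGL s) (hnorm : s ∈ Subgroup.normalizer (F : Set (GL (Fin n) ℂ)))
    (ι : GL (Fin n) ℂ) (hι : ι ∈ F) (hιs : IsSemisimpleGL (ι * s))
    (h e : GL (Fin n) ℂ) (hdec : s = h * e) (hcomm : h * e = e * h)
    (hh : IsHyperbolicGL h) (he : IsEllipticGL e)
    (h' e' : GL (Fin n) ℂ) (hdec' : ι * s = h' * e') (hcomm' : h' * e' = e' * h')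
    (hh' : IsHyperbolicGL h') (he' : IsEllipticGL e') :
    h' = h := by
  classical
  obtain ⟨P, d, hPd, hdpos⟩ := hh
  obtain ⟨Q, d', hQd, hdpos'⟩ := hh'
  obtain ⟨Pe, u, hPe, hu⟩ := he
  obtain ⟨Pe', u', hPe', hu'⟩ := he'
  choose r hrpos hdr using hdpos
  choose r' hrpos' hdr' using hdpos'
  have hd0 : ∀ i, d i ≠ 0 := fun i => by
    rw [hdr i]; exact_mod_cast (hrpos i).ne'
  have hd0' : ∀ i, d' i ≠ 0 := fun i => by
    rw [hdr' i]; exact_mod_cast (hrpos' i).ne'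
  have hu0 : ∀ i, u i ≠ 0 := fun i h0 => by
    have := hu i
    rw [h0] at this
    simp at this
  have hu0' : ∀ i, u' i ≠ 0 := fun i h0 => by
    have := hu' i
    rw [h0] at this
    simp at this
  set wh := P * h * P⁻¹ with whdef
  set wq := Q * h' * Q⁻¹ with wqdef
  set we := Pe * e * Pe⁻¹ with wedef
  set we' := Pe' * e' * Pe'⁻¹ with wedef'
  have hwh : ∀ k : ℤ, ((wh ^ k : GL (Fin n) ℂ) : PolarAux.Mat n)
      = Matrix.diagonal (fun i => d i ^ k) := PolarAux.val_zpow_diagonal wh d hd0 hPd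
  have hwq : ∀ k : ℤ, ((wq ^ k : GL (Fin n) ℂ) : PolarAux.Mat n)
      = Matrix.diagonal (fun i => d' i ^ k) := PolarAux.val_zpow_diagonal wq d' hd0' hQd
  have hwe : ∀ k : ℤ, ((we ^ k : GL (Fin n) ℂ) : PolarAux.Mat n)
      = Matrix.diagonal (fun i => u i ^ k) := PolarAux.val_zpow_diagonal we u hu0 hPe
  have hwe' : ∀ k : ℤ, ((we' ^ k : GL (Fin n) ℂ) : PolarAux.Mat n)
      = Matrix.diagonal (fun i => u' i ^ k) := PolarAux.val_zpow_diagonal we' u' hu0' hPe'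
  have hhk : ∀ k : ℤ, h ^ k = P⁻¹ * wh ^ k * P := by
    intro k
    have h1 : h = P⁻¹ * wh * P := by rw [whdef]; group
    rw [h1, ← PolarAux.conj_zpow P wh k, ← h1]
  have hqk : ∀ k : ℤ, h' ^ k = Q⁻¹ * wq ^ k * Q := by
    intro k
    have h1 : h' = Q⁻¹ * wq * Q := by rw [wqdef]; group
    rw [h1, ← PolarAux.conj_zpow Q wq k, ← h1]
  have hek : ∀ k : ℤ, e ^ k = Pe⁻¹ * we ^ k * Pe := by
    intro k
    have h1 : e = Pe⁻¹ * we * Pe := by rw [wedef]; group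
    rw [h1, ← PolarAux.conj_zpow Pe we k, ← h1]
  have hek' : ∀ k : ℤ, e' ^ k = Pe'⁻¹ * we' ^ k * Pe' := by
    intro k
    have h1 : e' = Pe'⁻¹ * we' * Pe' := by rw [wedef']; group
    rw [h1, ← PolarAux.conj_zpow Pe' we' k, ← h1]
  -- group membership of the "error terms"
  have hg : ∀ k : ℤ, s ^ (-k) * (ι * s) ^ k ∈ F := PolarAux.g_mem F s ι hι hnorm
  -- key identity
  have key : ∀ k : ℤ, h ^ (-k) * h' ^ k
      = e ^ k * (s ^ (-k) * (ι * s) ^ k) * e' ^ (-k) := by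
    intro k
    have h1 : (ι * s) ^ k = h' ^ k * e' ^ k := by
      rw [hdec']; exact Commute.mul_zpow hcomm' k
    have h2 : s ^ k = h ^ k * e ^ k := by
      rw [hdec]; exact Commute.mul_zpow hcomm k
    have h3 : s ^ (-k) = (h ^ k * e ^ k)⁻¹ := by
      rw [← h2, _root_.zpow_neg]
    rw [h1, h3]
    group
  -- uniform bound on the finite group
  obtain ⟨CF, hCF⟩ : ∃ CF : ℝ, ∀ f ∈ F, PolarAux.Nm (f : PolarAux.Mat n) ≤ CF := by
    have hfin : ((fun f : GL (Fin n) ℂ => PolarAux.Nm (f : PolarAux.Mat n)) '' F).Finite :=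
      hF.image _
    obtain ⟨CF, hCF⟩ := hfin.bddAbove
    exact ⟨CF, fun f hf => hCF (Set.mem_image_of_mem _ hf)⟩
  have hCF0 : 0 ≤ CF := le_trans (PolarAux.Nm_nonneg _) (hCF 1 F.one_mem)
  -- uniform bounds on elliptic powers
  set Ce : ℝ := PolarAux.Nm ((Pe⁻¹ : GL (Fin n) ℂ) : PolarAux.Mat n) * n
      * PolarAux.Nm ((Pe : GL (Fin n) ℂ) : PolarAux.Mat n) with Cedef
  set Ce' : ℝ := PolarAux.Nm ((Pe'⁻¹ : GL (Fin n) ℂ) : PolarAux.Mat n) * n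
      * PolarAux.Nm ((Pe' : GL (Fin n) ℂ) : PolarAux.Mat n) with Cedef'
  have ebound : ∀ (w : GL (Fin n) ℂ) (R : GL (Fin n) ℂ) (v : Fin n → ℂ)
      (hv1 : ∀ i, ‖v i‖ = 1) (k : ℤ)
      (hwk : ((w ^ k : GL (Fin n) ℂ) : PolarAux.Mat n) = Matrix.diagonal (fun i => v i ^ k))
      (x : GL (Fin n) ℂ) (hx : x ^ k = R⁻¹ * w ^ k * R),
      PolarAux.Nm ((x ^ k : GL (Fin n) ℂ) : PolarAux.Mat n)
        ≤ PolarAux.Nm ((R⁻¹ : GL (Fin n) ℂ) : PolarAux.Mat n) * n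
          * PolarAux.Nm ((R : GL (Fin n) ℂ) : PolarAux.Mat n) := by
    intro w R v hv1 k hwk x hx
    have hdiag : PolarAux.Nm (Matrix.diagonal (fun i => v i ^ k)) = (n : ℝ) := by
      rw [PolarAux.Nm_diagonal]
      have : ∀ i, ‖v i ^ k‖ = 1 := fun i => by
        rw [norm_zpow, hv1 i, one_zpow]
      simp [this]
    have h1 : ((x ^ k : GL (Fin n) ℂ) : PolarAux.Mat n)
        = ((R⁻¹ : GL (Fin n) ℂ) : PolarAux.Mat n) * Matrix.diagonal (fun i => v i ^ k)
          * ((R : GL (Fin n) ℂ) : PolarAux.Mat n) := by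
      rw [hx, Units.val_mul, Units.val_mul, hwk]
    rw [h1]
    calc PolarAux.Nm (((R⁻¹ : GL (Fin n) ℂ) : PolarAux.Mat n)
            * Matrix.diagonal (fun i => v i ^ k) * ((R : GL (Fin n) ℂ) : PolarAux.Mat n))
        ≤ PolarAux.Nm (((R⁻¹ : GL (Fin n) ℂ) : PolarAux.Mat n)
            * Matrix.diagonal (fun i => v i ^ k))
          * PolarAux.Nm ((R : GL (Fin n) ℂ) : PolarAux.Mat n) := PolarAux.Nm_mul_le _ _
      _ ≤ (PolarAux.Nm ((R⁻¹ : GL (Fin n) ℂ) : PolarAux.Mat n)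
            * PolarAux.Nm (Matrix.diagonal (fun i => v i ^ k)))
          * PolarAux.Nm ((R : GL (Fin n) ℂ) : PolarAux.Mat n) :=
          mul_le_mul_of_nonneg_right (PolarAux.Nm_mul_le _ _) (PolarAux.Nm_nonneg _)
      _ = PolarAux.Nm ((R⁻¹ : GL (Fin n) ℂ) : PolarAux.Mat n) * n
          * PolarAux.Nm ((R : GL (Fin n) ℂ) : PolarAux.Mat n) := by rw [hdiag]
  have heb : ∀ k : ℤ, PolarAux.Nm ((e ^ k : GL (Fin n) ℂ) : PolarAux.Mat n) ≤ Ce :=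
    fun k => ebound we Pe u hu k (hwe k) e (hek k)
  have heb' : ∀ k : ℤ, PolarAux.Nm ((e' ^ k : GL (Fin n) ℂ) : PolarAux.Mat n) ≤ Ce' :=
    fun k => ebound we' Pe' u' hu' k (hwe' k) e' (hek' k)
  have hCe0 : 0 ≤ Ce := le_trans (PolarAux.Nm_nonneg _) (heb 0)
  have hCe0' : 0 ≤ Ce' := le_trans (PolarAux.Nm_nonneg _) (heb' 0)
  -- global bound
  set C : ℝ := Ce * CF * Ce' with Cdef
  have hbound : ∀ k : ℤ, PolarAux.Nm ((↑(h ^ (-k) * h' ^ k) : PolarAux.Mat n)) ≤ C := by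
    intro k
    rw [key k, Units.val_mul, Units.val_mul]
    calc PolarAux.Nm (((e ^ k : GL (Fin n) ℂ) : PolarAux.Mat n)
            * ((s ^ (-k) * (ι * s) ^ k : GL (Fin n) ℂ) : PolarAux.Mat n)
            * ((e' ^ (-k) : GL (Fin n) ℂ) : PolarAux.Mat n))
        ≤ PolarAux.Nm (((e ^ k : GL (Fin n) ℂ) : PolarAux.Mat n)
            * ((s ^ (-k) * (ι * s) ^ k : GL (Fin n) ℂ) : PolarAux.Mat n))
          * PolarAux.Nm ((e' ^ (-k) : GL (Fin n) ℂ) : PolarAux.Mat n) :=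
          PolarAux.Nm_mul_le _ _
      _ ≤ (PolarAux.Nm ((e ^ k : GL (Fin n) ℂ) : PolarAux.Mat n)
            * PolarAux.Nm ((s ^ (-k) * (ι * s) ^ k : GL (Fin n) ℂ) : PolarAux.Mat n))
          * PolarAux.Nm ((e' ^ (-k) : GL (Fin n) ℂ) : PolarAux.Mat n) :=
          mul_le_mul_of_nonneg_right (PolarAux.Nm_mul_le _ _) (PolarAux.Nm_nonneg _)
      _ ≤ Ce * CF * Ce' := by
          apply mul_le_mul _ (heb' (-k)) (PolarAux.Nm_nonneg _) (by positivity)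
          exact mul_le_mul (heb k) (hCF _ (hg k)) (PolarAux.Nm_nonneg _) hCe0
  -- transport to the diagonal side
  set M : PolarAux.Mat n := ((P : GL (Fin n) ℂ) : PolarAux.Mat n)
      * ((Q⁻¹ : GL (Fin n) ℂ) : PolarAux.Mat n) with Mdef
  set C2 : ℝ := PolarAux.Nm ((P : GL (Fin n) ℂ) : PolarAux.Mat n) * C
      * PolarAux.Nm ((Q⁻¹ : GL (Fin n) ℂ) : PolarAux.Mat n) with C2def
  have hX : ∀ k : ℤ, Matrix.diagonal (fun i => d i ^ (-k)) * M
      * Matrix.diagonal (fun i => d' i ^ k)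
      = ((P : GL (Fin n) ℂ) : PolarAux.Mat n) * ((h ^ (-k) * h' ^ k : GL (Fin n) ℂ) : PolarAux.Mat n)
        * ((Q⁻¹ : GL (Fin n) ℂ) : PolarAux.Mat n) := by
    intro k
    have hGL : P * (h ^ (-k) * h' ^ k) * Q⁻¹ = wh ^ (-k) * (P * Q⁻¹) * wq ^ k := by
      rw [hhk (-k), hqk k]
      group
    have hcoe := congrArg (fun z : GL (Fin n) ℂ => (z : PolarAux.Mat n)) hGL
    simp only [Units.val_mul, hwh (-k), hwq k] at hcoe
    rw [show M = ((P : GL (Fin n) ℂ) : PolarAux.Mat n)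
      * ((Q⁻¹ : GL (Fin n) ℂ) : PolarAux.Mat n) from rfl]
    simp only [Units.val_mul]
    simp only [mul_assoc] at hcoe ⊢
    exact hcoe.symm
  have hXbound : ∀ k : ℤ, PolarAux.Nm (Matrix.diagonal (fun i => d i ^ (-k)) * M
      * Matrix.diagonal (fun i => d' i ^ k)) ≤ C2 := by
    intro k
    rw [hX k]
    calc PolarAux.Nm (((P : GL (Fin n) ℂ) : PolarAux.Mat n)
            * ((h ^ (-k) * h' ^ k : GL (Fin n) ℂ) : PolarAux.Mat n)
            * ((Q⁻¹ : GL (Fin n) ℂ) : PolarAux.Mat n))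
        ≤ PolarAux.Nm (((P : GL (Fin n) ℂ) : PolarAux.Mat n)
            * ((h ^ (-k) * h' ^ k : GL (Fin n) ℂ) : PolarAux.Mat n))
          * PolarAux.Nm ((Q⁻¹ : GL (Fin n) ℂ) : PolarAux.Mat n) := PolarAux.Nm_mul_le _ _
      _ ≤ (PolarAux.Nm ((P : GL (Fin n) ℂ) : PolarAux.Mat n)
            * PolarAux.Nm ((h ^ (-k) * h' ^ k : GL (Fin n) ℂ) : PolarAux.Mat n))
          * PolarAux.Nm ((Q⁻¹ : GL (Fin n) ℂ) : PolarAux.Mat n) :=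
          mul_le_mul_of_nonneg_right (PolarAux.Nm_mul_le _ _) (PolarAux.Nm_nonneg _)
      _ ≤ C2 := by
          rw [C2def]
          apply mul_le_mul_of_nonneg_right _ (PolarAux.Nm_nonneg _)
          exact mul_le_mul_of_nonneg_left (hbound k) (PolarAux.Nm_nonneg _)
  -- entrywise conclusion
  have hMD : M * Matrix.diagonal d' = Matrix.diagonal d * M := by
    ext i j
    rw [Matrix.mul_diagonal, Matrix.diagonal_mul]
    by_cases hc : M i j = 0
    · simp [hc]
    · have hcpos : 0 < ‖M i j‖ := by
        simpa [norm_pos_iff] using hc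
      have hrr : r' j = r i := by
        apply PolarAux.eq_of_zpow_bounded (hrpos i) (hrpos' j) hcpos
        intro k
        have hb := hXbound k
        have hentry := PolarAux.entry_le_Nm (Matrix.diagonal (fun i => d i ^ (-k)) * M
          * Matrix.diagonal (fun i => d' i ^ k)) i j
        have hval : (Matrix.diagonal (fun i => d i ^ (-k)) * M
            * Matrix.diagonal (fun i => d' i ^ k)) i j = d i ^ (-k) * M i j * d' j ^ k := by
          rw [Matrix.mul_diagonal, Matrix.diagonal_mul]
        rw [hval] at hentry
        have habs : ‖d i ^ (-k) * M i j * d' j ^ k‖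
            = ‖M i j‖ * (r' j / r i) ^ k := by
          rw [norm_mul, norm_mul, norm_zpow, norm_zpow, hdr i, hdr' j,
            Complex.norm_real, Complex.norm_real, Real.norm_eq_abs, Real.norm_eq_abs, abs_of_pos (hrpos i),
            abs_of_pos (hrpos' j), div_zpow, _root_.zpow_neg, div_eq_mul_inv]
          ring
        rw [habs] at hentry
        exact hentry.trans hb
      rw [hdr i, hdr' j, hrr]
      ring
  -- conclude at the group level
  have hval : ((P * Q⁻¹ * wq : GL (Fin n) ℂ) : PolarAux.Mat n)
      = ((wh * (P * Q⁻¹) : GL (Fin n) ℂ) : PolarAux.Mat n) := by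
    simp only [Units.val_mul]
    have h1 : ((wq : GL (Fin n) ℂ) : PolarAux.Mat n) = Matrix.diagonal d' := hQd
    have h2 : ((wh : GL (Fin n) ℂ) : PolarAux.Mat n) = Matrix.diagonal d := hPd
    rw [h1, h2]
    calc ((P : GL (Fin n) ℂ) : PolarAux.Mat n) * ((Q⁻¹ : GL (Fin n) ℂ) : PolarAux.Mat n)
          * Matrix.diagonal d' = M * Matrix.diagonal d' := by rw [Mdef]
      _ = Matrix.diagonal d * M := hMD
      _ = Matrix.diagonal d * (((P : GL (Fin n) ℂ) : PolarAux.Mat n)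
          * ((Q⁻¹ : GL (Fin n) ℂ) : PolarAux.Mat n)) := by rw [Mdef]
      _ = _ := by rw [← mul_assoc]
  have hGLeq : P * Q⁻¹ * wq = wh * (P * Q⁻¹) := Units.ext hval
  rw [whdef, wqdef] at hGLeq
  have h2 : P * h' * Q⁻¹ = P * h * Q⁻¹ := by
    calc P * h' * Q⁻¹ = P * Q⁻¹ * (Q * h' * Q⁻¹) := by group
      _ = P * h * P⁻¹ * (P * Q⁻¹) := hGLeq
      _ = P * h * Q⁻¹ := by group
  have h3 : P * h' = P * h := mul_right_cancel h2
  exact mul_left_cancel h3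
end
end

section
/- Let n ≥ 1, let F be a finite subgroup of GL_n(ℂ), and let ε ∈ GL_n(ℂ) be semisimple with all eigenvalues of absolute value 1 (elliptic semisimple), normalizing F (that is, ε·F·ε⁻¹ = F). Then every element of the coset ε·F is semisimple with all eigenvalues of absolute value 1. -/
noncomputable section

open Polynomial in
lemma sep_aux {N : ℕ} (hN : 0 < N) (S : Finset ℂ) (hSne : ∀ c ∈ S, c ≠ 0) :
    (∏ c ∈ S, (X ^ N - C c) : ℂ[X]).Separable := by
  apply Polynomial.separable_prod'
  · intro c hc c' hc' hne
    have hcc : (c' - c) ≠ 0 := sub_ne_zero.mpr (Ne.symm hne)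
    refine ⟨C ((c' - c)⁻¹), -C ((c' - c)⁻¹), ?_⟩
    have : (C ((c' - c)⁻¹) : ℂ[X]) * (X ^ N - C c) + (-C ((c' - c)⁻¹)) * (X ^ N - C c') =
        C ((c' - c)⁻¹) * (C c' - C c) := by ring
    rw [this, ← C_sub, ← C_mul, inv_mul_cancel₀ hcc, C_1]
  · intro c hc
    exact Polynomial.separable_X_pow_sub_C c
      (by exact_mod_cast Nat.cast_ne_zero.mpr hN.ne') (hSne c hc)

open Polynomial in
lemma aeval_units_conj {M : Type*} [Ring M] [Algebra ℂ M] (u : Mˣ) (m : M) (p : ℂ[X]) :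
    aeval ((u : M) * m * (↑u⁻¹ : M)) p = (u : M) * aeval m p * (↑u⁻¹ : M) := by
  induction p using Polynomial.induction_on with
  | C a => simp [Algebra.algebraMap_eq_smul_one, mul_smul_comm, smul_mul_assoc]
  | add f g hf hg => simp [hf, hg, mul_add, add_mul]
  | monomial k a ih =>
    simp only [map_mul, aeval_C, aeval_X_pow] at *
    rw [pow_succ, pow_succ, ← mul_assoc, ih]
    simp [mul_assoc, Units.inv_mul_cancel_left]

open Polynomial Module Matrix in
lemma elliptic_of_pow_elliptic {n N : ℕ} (hN : 0 < N) (x : GL (Fin n) ℂ)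
    (h : IsEllipticGL (x ^ N)) : IsEllipticGL x := by
  classical
  obtain ⟨P, d, hPd, hd⟩ := h
  set A : Matrix (Fin n) (Fin n) ℂ := (x : Matrix (Fin n) (Fin n) ℂ) with hA
  set S : Finset ℂ := Finset.image d Finset.univ with hS
  set q : ℂ[X] := ∏ c ∈ S, (X - C c) with hq
  set p : ℂ[X] := ∏ c ∈ S, (X ^ N - C c) with hp
  have hSabs : ∀ c ∈ S, ‖c‖ = 1 := by
    intro c hc
    obtain ⟨i, _, rfl⟩ := Finset.mem_image.mp hc
    exact hd i
  have hSne : ∀ c ∈ S, c ≠ 0 := by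
    intro c hc h0
    have := hSabs c hc
    rw [h0] at this; simp at this
  have hsep : p.Separable := sep_aux hN S hSne
  -- q annihilates the diagonal matrix
  have hqD : aeval (Matrix.diagonal d) q = 0 := by
    have h1 : aeval (Matrix.diagonal d) q = Matrix.diagonal (aeval d q) := by
      have := Polynomial.aeval_algHom_apply (Matrix.diagonalAlgHom (n := Fin n) ℂ) d q
      exact this
    have h2 : (aeval d q) = 0 := by
      funext i
      rw [hq, map_prod, Finset.prod_apply]
      refine Finset.prod_eq_zero (Finset.mem_image.mpr ⟨i, Finset.mem_univ i, rfl⟩) ?_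
      simp [Pi.algebraMap_apply]
    rw [h1, h2]
    ext i j
    simp [Matrix.diagonal_apply]
  -- p annihilates A
  have hcomp : p = q.comp (X ^ N) := by
    rw [hq, hp, Polynomial.prod_comp]
    simp [Polynomial.sub_comp]
  have hAN : A ^ N = (↑(P⁻¹) : Matrix (Fin n) (Fin n) ℂ) * Matrix.diagonal d * (↑P : Matrix (Fin n) (Fin n) ℂ) := by
    have h1 : x ^ N = P⁻¹ * (P * x ^ N * P⁻¹) * P := by group
    have h2 : (x ^ N).val = (P⁻¹).val * (P * x ^ N * P⁻¹).val * P.val := by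
      rw [← Units.val_mul, ← Units.val_mul, ← h1]
    have h3 : A ^ N = (x ^ N).val := (Units.val_pow_eq_pow_val x N).symm
    rw [h3, h2, hPd]
  have hpA : aeval A p = 0 := by
    rw [hcomp, Polynomial.aeval_comp, Polynomial.aeval_X_pow, hAN]
    have := aeval_units_conj (M := Matrix (Fin n) (Fin n) ℂ) P⁻¹ (Matrix.diagonal d) q
    rw [inv_inv] at this
    rw [this, hqD, mul_zero, zero_mul]
  -- pass to the endomorphism
  set f : Module.End ℂ (Fin n → ℂ) := Matrix.toLinAlgEquiv' A with hf
  have hfp : aeval f p = 0 := by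
    rw [hf, Polynomial.aeval_algEquiv]
    simp [hpA]
  have hss : f.IsSemisimple :=
    Module.End.isSemisimple_of_squarefree_aeval_eq_zero hsep.squarefree hfp
  have hfs : f.IsFinitelySemisimple := hss.isFinitelySemisimple
  have hsup : ⨆ μ : ℂ, f.eigenspace μ = ⊤ := by
    have h1 := Module.End.iSup_maxGenEigenspace_eq_top f
    have h2 : ∀ μ : ℂ, f.maxGenEigenspace μ = f.eigenspace μ := fun μ =>
      hfs.maxGenEigenspace_eq_eigenspace μ
    simpa [h2] using h1
  have hind : iSupIndep (fun μ : ℂ => f.eigenspace μ) := f.eigenspaces_iSupIndep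
  have hint : DirectSum.IsInternal (fun μ : ℂ => f.eigenspace μ) :=
    DirectSum.isInternal_submodule_of_iSupIndep_of_iSup_eq_top hind hsup
  let v : ∀ μ : ℂ, Basis (Module.Free.ChooseBasisIndex ℂ (f.eigenspace μ)) ℂ (f.eigenspace μ) :=
    fun μ => Module.Free.chooseBasis ℂ (f.eigenspace μ)
  let b₀ := hint.collectedBasis v
  haveI : Fintype (Σ μ : ℂ, Module.Free.ChooseBasisIndex ℂ (f.eigenspace μ)) :=
    FiniteDimensional.fintypeBasisIndex b₀
  have hcard : Fintype.card (Σ μ : ℂ, Module.Free.ChooseBasisIndex ℂ (f.eigenspace μ)) = n := by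
    rw [← Module.finrank_eq_card_basis b₀, Module.finrank_fin_fun]
  let eqv := Fintype.equivFinOfCardEq hcard
  let b := b₀.reindex eqv
  set dd : Fin n → ℂ := fun i => (eqv.symm i).1 with hdd
  have hbmem : ∀ j, b₀ j ∈ f.eigenspace j.1 := fun j => hint.collectedBasis_mem v j
  have hfb : ∀ i, f (b i) = dd i • b i := by
    intro i
    have := hbmem (eqv.symm i)
    rw [Module.End.mem_eigenspace_iff] at this
    simpa [b, Module.Basis.reindex_apply, hdd] using this
  -- eigenvalues have absolute value one
  have habs : ∀ i, ‖dd i‖ = 1 := by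
    intro i
    have hne : f.eigenspace (dd i) ≠ ⊥ := by
      intro hbot
      have hmem := hbmem (eqv.symm i)
      rw [hbot, Submodule.mem_bot] at hmem
      exact b₀.ne_zero (eqv.symm i) hmem
    have hev : f.HasEigenvalue (dd i) := hne
    have hdvd : minpoly ℂ f ∣ p := minpoly.dvd ℂ f hfp
    have hroot : p.IsRoot (dd i) :=
      (Module.End.hasEigenvalue_iff_isRoot.mp hev).dvd hdvd
    rw [hp, Polynomial.IsRoot, Polynomial.eval_prod] at hroot
    obtain ⟨c, hcS, hc0⟩ := Finset.prod_eq_zero_iff.mp hroot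
    have hcval : dd i ^ N = c := by
      simpa [sub_eq_zero] using hc0
    have habsN : ‖dd i‖ ^ N = 1 := by
      rw [← norm_pow, hcval]; exact hSabs c hcS
    have h0 : (0:ℝ) ≤ ‖dd i‖ := norm_nonneg _
    rcases (pow_eq_one_iff_cases).mp habsN with h | h | h
    · omega
    · exact h
    · exfalso
      obtain ⟨h1, -⟩ := h
      nlinarith [h0, h1]
  -- change of basis matrices
  let e0 : Basis (Fin n) ℂ (Fin n → ℂ) := Pi.basisFun ℂ (Fin n)
  let Q : Matrix (Fin n) (Fin n) ℂ := LinearMap.toMatrix e0 b LinearMap.id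
  let R : Matrix (Fin n) (Fin n) ℂ := LinearMap.toMatrix b e0 LinearMap.id
  have hQR : Q * R = 1 := by
    rw [← LinearMap.toMatrix_comp b e0 b LinearMap.id LinearMap.id]
    simp [LinearMap.toMatrix_id]
  have hRQ : R * Q = 1 := by
    rw [← LinearMap.toMatrix_comp e0 b e0 LinearMap.id LinearMap.id]
    simp [LinearMap.toMatrix_id]
  have hAe0 : LinearMap.toMatrix e0 e0 f = A := by
    rw [show (LinearMap.toMatrix e0 e0 : _ ≃ₗ[ℂ] _) = LinearMap.toMatrix' from
      LinearMap.toMatrix_eq_toMatrix']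
    rw [hf]
    ext i j
    simp [Matrix.toLinAlgEquiv'_apply, LinearMap.toMatrix'_apply, Matrix.mulVec,
      dotProduct, Pi.single_apply, mul_ite, mul_one, mul_zero]
  have hconj : LinearMap.toMatrix b b f = Q * A * R := by
    have h1 : f = (LinearMap.id.comp f).comp LinearMap.id := by simp
    rw [h1, LinearMap.toMatrix_comp b e0 b, LinearMap.toMatrix_comp e0 e0 b, hAe0, mul_assoc]
  have hdiagmat : LinearMap.toMatrix b b f = Matrix.diagonal dd := by
    ext i j
    rw [LinearMap.toMatrix_apply, hfb j]
    by_cases hij : i = j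
    · simp [Basis.repr_self, Matrix.diagonal_apply, hij]
    · simp [Basis.repr_self, Finsupp.single_apply, Matrix.diagonal_apply, hij, Ne.symm hij]
  refine ⟨⟨Q, R, hQR, hRQ⟩, dd, ?_, habs⟩
  have hval : ((⟨Q, R, hQR, hRQ⟩ : GL (Fin n) ℂ) * x * (⟨Q, R, hQR, hRQ⟩ : GL (Fin n) ℂ)⁻¹).val
      = Q * A * R := by
    rw [Units.val_mul, Units.val_mul]
    rfl
  rw [hval, ← hconj, hdiagmat]

/-- If an elliptic semisimple element `ε` of `GL_n(ℂ)` normalizes a finite subgroup `F`,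
then every element of the coset `ε·F` is elliptic semisimple. -/
theorem coset_elliptic_of_elliptic_normalizes_finite (n : ℕ) (hn : 1 ≤ n)
    (F : Subgroup (GL (Fin n) ℂ)) (hF : (F : Set (GL (Fin n) ℂ)).Finite)
    (ε : GL (Fin n) ℂ) (hε : IsEllipticGL ε) (hnorm : ε ∈ Subgroup.normalizer (F : Set (GL (Fin n) ℂ))) :
    ∀ g ∈ F, IsEllipticGL (ε * g) := by
  intro g hg
  haveI : Finite F := hF.to_subtype
  have hmemF : ∀ h : GL (Fin n) ℂ, h ∈ F ↔ ε * h * ε⁻¹ ∈ F :=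
    Subgroup.mem_normalizer_iff.mp hnorm
  have hmemF' : ∀ h : GL (Fin n) ℂ, h ∈ F ↔ ε⁻¹ * h * ε ∈ F := by
    intro h
    have := Subgroup.mem_normalizer_iff.mp ((Subgroup.normalizer (F : Set (GL (Fin n) ℂ))).inv_mem hnorm) h
    simpa using this
  let σ : F ≃* F :=
  { toFun := fun f => ⟨ε * f * ε⁻¹, (hmemF f).mp f.2⟩
    invFun := fun f => ⟨ε⁻¹ * f * ε, (hmemF' f).mp f.2⟩
    left_inv := by intro f; ext; simp [mul_assoc]
    right_inv := by intro f; ext; simp [mul_assoc]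
    map_mul' := by intro f f'; apply Subtype.ext; show ε * ((f : GL (Fin n) ℂ) * f') * ε⁻¹ = (ε * f * ε⁻¹) * (ε * f' * ε⁻¹); group }
  haveI : Finite (F ≃* F) := Finite.of_injective (fun e => (e : F → F)) DFunLike.coe_injective
  set m := orderOf σ with hm
  have hmpos : 0 < m := orderOf_pos σ
  have hσ : ∀ (k : ℕ) (f : F), (((σ ^ k) f : F) : GL (Fin n) ℂ) = ε ^ k * f * (ε ^ k)⁻¹ := by
    intro k
    induction k with
    | zero => intro f; simp
    | succ k ih =>
      intro f
      have h1 : ((σ ^ (k+1)) f) = (σ ^ k) (σ f) := by rw [pow_succ]; rfl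
      rw [h1, ih (σ f)]
      show ε ^ k * (ε * (f : GL (Fin n) ℂ) * ε⁻¹) * (ε ^ k)⁻¹ = _
      rw [pow_succ]
      group
  have hfix : ∀ f ∈ F, (ε ^ m)⁻¹ * f * ε ^ m = f := by
    intro f hf
    have h1 : ((σ ^ m) ⟨f, hf⟩ : F) = ⟨f, hf⟩ := by
      rw [hm, pow_orderOf_eq_one σ]; rfl
    have h2 := congrArg (Subtype.val) h1
    rw [hσ m ⟨f, hf⟩] at h2
    simp only at h2
    conv_lhs => rw [← h2]
    simp [mul_assoc]
  set x := ε * g with hx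
  set t : ℕ → GL (Fin n) ℂ := fun k => (ε ^ k)⁻¹ * x ^ k with ht
  have htF : ∀ k, t k ∈ F := by
    intro k
    induction k with
    | zero => simpa [ht] using F.one_mem
    | succ k ih =>
      have heq : t (k+1) = (ε⁻¹ * t k * ε) * g := by
        rw [ht]; simp only [hx]; rw [pow_succ, pow_succ]; group
      rw [heq]
      exact F.mul_mem ((hmemF' _).mp ih) hg
  have hcross : ∀ a c : ℕ, t (a + c) = ((ε ^ c)⁻¹ * t a * ε ^ c) * t c := by
    intro a c
    rw [ht]; simp only; rw [pow_add, pow_add]; group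
  have htm : ∀ j : ℕ, t (m * j) = (t m) ^ j := by
    intro j
    induction j with
    | zero => simp [ht]
    | succ j ih =>
      have hmj : m * (j+1) = m * j + m := by ring
      rw [hmj, hcross (m * j) m, hfix _ (htF (m*j)), ih, pow_succ]
  set r := orderOf (⟨t m, htF m⟩ : F) with hr
  have hrpos : 0 < r := orderOf_pos _
  have htN : t (m * r) = 1 := by
    have h2 : ((⟨t m, htF m⟩ : F) ^ r) = 1 := by rw [hr]; exact pow_orderOf_eq_one _
    have h3 := congrArg (Subtype.val) h2
    rw [htm r]
    simpa using h3
  have hxN : x ^ (m * r) = ε ^ (m * r) := by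
    have h1 : (ε ^ (m*r))⁻¹ * x ^ (m*r) = 1 := htN
    calc x ^ (m*r) = ε ^ (m*r) * ((ε ^ (m*r))⁻¹ * x ^ (m*r)) := by group
    _ = ε ^ (m*r) := by rw [h1, mul_one]
  obtain ⟨P, d, hPd, hd⟩ := hε
  have hεN : IsEllipticGL (ε ^ (m*r)) := by
    refine ⟨P, fun i => d i ^ (m*r), ?_, fun i => by rw [norm_pow, hd i, one_pow]⟩
    have h1 : P * ε ^ (m*r) * P⁻¹ = (P * ε * P⁻¹) ^ (m*r) := by
      rw [conj_pow]
    rw [h1, Units.val_pow_eq_pow_val, hPd]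
    exact Matrix.diagonal_pow d (m*r)
  apply elliptic_of_pow_elliptic (Nat.mul_pos hmpos hrpos) (ε * g)
  rw [← hx, hxN]
  exact hεN

end
end
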